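/- In a unique guarded fixpoint category (C, ▷), the dagger is uniform: for f : ▷X × Y → X, g : ▷X' × Y → X', and h : X → X', if h ∘ f = g ∘ (▷h × id_Y) then h ∘ f† = g†. -/
import Mathlib


open CategoryTheory CategoryTheory.Limits

/-- In a unique guarded fixpoint category `(C, ▷)`, the dagger is uniform: for
`f : ▷X × Y → X`, `g : ▷X' × Y → X'` and `h : X → X'`, if `h ∘ f = g ∘ (▷h × id_Y)`
then `h ∘ f† = g†`. -/
theorem stmt8 {C : Type*} [Category C] [HasFiniteProducts C]
    (F : C ⥤ C) (p : 𝟭 C ⟶ F)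
    (dag : ∀ {X Y : C}, (F.obj X ⨯ Y ⟶ X) → (Y ⟶ X))
    (hfix : ∀ {X Y : C} (f : F.obj X ⨯ Y ⟶ X),
      dag f = prod.lift (dag f) (𝟙 Y) ≫ prod.map (p.app X) (𝟙 Y) ≫ f)
    (huniq : ∀ {X Y : C} (f : F.obj X ⨯ Y ⟶ X) (s : Y ⟶ X),
      s = prod.lift s (𝟙 Y) ≫ prod.map (p.app X) (𝟙 Y) ≫ f → s = dag f) :
    ∀ {X X' Y : C} (f : F.obj X ⨯ Y ⟶ X) (g : F.obj X' ⨯ Y ⟶ X') (h : X ⟶ X'),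
      f ≫ h = prod.map (F.map h) (𝟙 Y) ≫ g → dag f ≫ h = dag g := by
  intro X X' Y f g h hcomm
  apply huniq
  calc dag f ≫ h
      = (prod.lift (dag f) (𝟙 Y) ≫ prod.map (p.app X) (𝟙 Y) ≫ f) ≫ h := by
        rw [← hfix f]
    _ = prod.lift (dag f) (𝟙 Y) ≫ prod.map (p.app X) (𝟙 Y) ≫
          prod.map (F.map h) (𝟙 Y) ≫ g := by
        simp [hcomm]
    _ = prod.lift (dag f) (𝟙 Y) ≫ prod.map (p.app X ≫ F.map h) (𝟙 Y) ≫ g := by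
        simp
    _ = prod.lift (dag f) (𝟙 Y) ≫ prod.map (h ≫ p.app X') (𝟙 Y) ≫ g := by
        have := p.naturality h; simp at this; rw [← this]
    _ = prod.lift (dag f ≫ h) (𝟙 Y) ≫ prod.map (p.app X') (𝟙 Y) ≫ g := by
        simp
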